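/- arXiv:2408.02526 — 8 statements merged into one kernel-verified Lean document; each statement's English description precedes it below -/
import Mathlib

section
/- Fix a real number γ and an integer ℓ ≥ 1. Let r₁,…,r_ℓ and s₁,…,s_ℓ be points in ℝ² and let y₁,…,y_ℓ and w₁,…,w_ℓ be real numbers (dual values for the requests r_k and servers s_k) satisfying: (i) y_k + w_k ≤ γ·D(r_k, s_k) for every 1 ≤ k ≤ ℓ; (ii) w_k + y_{k+1} = D(s_k, r_{k+1}) for every 1 ≤ k ≤ ℓ−1; (iii) y₁ = 0 and w_ℓ = 0. Then the γ-net-cost of the path r₁ s₁ r₂ s₂ ⋯ r_ℓ s_ℓ is nonnegative: γ·Σ_{k=1}^{ℓ} D(r_k, s_k) − Σ_{k=1}^{ℓ−1} D(s_k, r_{k+1}) ≥ 0. -/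
open Finset

/-- ℓ1 distance in the time-augmented (TA) plane. -/
def taDist (p q : ℝ × ℝ) : ℝ := |p.1 - q.1| + |p.2 - q.2|

/-!
Weak duality along the path: by (i), γ times the forward cost dominates the total dual
`∑ (y k + w k)`. Regrouping that sum as `y₀ + w_ℓ` plus the backward pairs `w k + y (k+1)`,
the free endpoints contribute nothing by (iii) and each backward pair is exactly a backward
edge length by (ii), so the total dual equals the backward cost.
-/

theorem sum_range_succ_add_eq_add_sum_shift {M : Type*} [AddCommMonoid M]
    (y w : ℕ → M) (m : ℕ) :
    ∑ k ∈ range (m + 1), (y k + w k) = y 0 + w m + ∑ k ∈ range m, (w k + y (k + 1)) := by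
  rw [sum_add_distrib, sum_add_distrib, sum_range_succ' y, sum_range_succ w]
  abel

theorem sum_range_le_sum_range_succ_of_dual {M : Type*} [AddCommMonoid M] [PartialOrder M]
    [IsOrderedAddMonoid M] (f b y w : ℕ → M) (m : ℕ)
    (hf : ∀ k < m + 1, y k + w k ≤ f k) (hb : ∀ k < m, w k + y (k + 1) = b k)
    (hy : y 0 = 0) (hw : w m = 0) :
    ∑ k ∈ range m, b k ≤ ∑ k ∈ range (m + 1), f k :=
  calc ∑ k ∈ range m, b k
      = ∑ k ∈ range m, (w k + y (k + 1)) :=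
        (sum_congr rfl fun k hk => hb k (mem_range.mp hk)).symm
    _ = ∑ k ∈ range (m + 1), (y k + w k) := by
        rw [sum_range_succ_add_eq_add_sum_shift, hy, hw, add_zero, zero_add]
    _ ≤ ∑ k ∈ range (m + 1), f k := sum_le_sum fun k hk => hf k (mem_range.mp hk)

/-- Lemma 3.2 (realgeq0): a real augmenting path satisfying the dual invariants
has nonnegative γ-net-cost. -/
theorem realPath_netCost_nonneg (γ : ℝ) (ℓ : ℕ) (hℓ : 1 ≤ ℓ)
    (r s : ℕ → ℝ × ℝ) (y w : ℕ → ℝ)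
    (h1 : ∀ k < ℓ, y k + w k ≤ γ * taDist (r k) (s k))
    (h2 : ∀ k, k + 1 < ℓ → w k + y (k + 1) = taDist (s k) (r (k + 1)))
    (h3 : y 0 = 0) (h4 : w (ℓ - 1) = 0) :
    0 ≤ γ * ∑ k ∈ range ℓ, taDist (r k) (s k)
        - ∑ k ∈ range (ℓ - 1), taDist (s k) (r (k + 1)) := by
  obtain ⟨m, rfl⟩ : ∃ m, ℓ = m + 1 := ⟨ℓ - 1, (Nat.sub_add_cancel hℓ).symm⟩
  rw [Nat.add_sub_cancel] at h4 ⊢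
  rw [sub_nonneg, mul_sum]
  exact sum_range_le_sum_range_succ_of_dual _ _ y w m h1 (fun k hk => h2 k (by omega)) h3 h4
end

section
/- Fix a real number γ and an integer ℓ ≥ 1. Let r₁,…,r_ℓ and s₁,…,s_{ℓ−1} be points in ℝ², let τ ≥ 0 be a real number (the current waiting time of the last request r_ℓ, i.e. the TA-plane distance to its moving virtual server), and let y₁,…,y_ℓ, w₁,…,w_{ℓ−1}, w̃ be real numbers satisfying: (i) y_k + w_k ≤ γ·D(r_k, s_k) for every 1 ≤ k ≤ ℓ−1; (ii) w_k + y_{k+1} = D(s_k, r_{k+1}) for every 1 ≤ k ≤ ℓ−1; (iii) y_ℓ + w̃ ≤ γ·τ; (iv) y₁ = 0 and w̃ = 0. Then γ·τ + γ·Σ_{k=1}^{ℓ−1} D(r_k, s_k) − Σ_{k=1}^{ℓ−1} D(s_k, r_{k+1}) ≥ 0. -/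
open Finset

/- Subtracting the forward inequalities from the backward equalities, the `w k` cancel
and the `y k` telescope. -/
theorem sum_range_le_sum_range_add_of_dual {a b y w : ℕ → ℝ} {n : ℕ}
    (hfwd : ∀ k < n, y k + w k ≤ a k) (hbwd : ∀ k < n, w k + y (k + 1) = b k) :
    ∑ k ∈ range n, b k ≤ ∑ k ∈ range n, a k + (y n - y 0) := by
  have hforward : ∑ k ∈ range n, (y k + w k) ≤ ∑ k ∈ range n, a k :=
    sum_le_sum fun k hk => hfwd k (mem_range.mp hk)
  have hbackward : ∑ k ∈ range n, b k = ∑ k ∈ range n, (w k + y (k + 1)) :=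
    sum_congr rfl fun k hk => (hbwd k (mem_range.mp hk)).symm
  have htelescope : ∑ k ∈ range n, (w k + y (k + 1)) - ∑ k ∈ range n, (y k + w k)
      = y n - y 0 := by
    rw [← sum_sub_distrib, ← sum_range_sub y]
    exact sum_congr rfl fun k _ => by ring
  linarith

theorem virtualPath_netCost_nonneg_general (γ : ℝ) (ℓ : ℕ)
    (r s : ℕ → ℝ × ℝ) (τ : ℝ)
    (y w : ℕ → ℝ) (wt : ℝ)
    (h1 : ∀ k, k < ℓ - 1 → y k + w k ≤ γ * taDist (r k) (s k))
    (h2 : ∀ k, k + 1 < ℓ → w k + y (k + 1) = taDist (s k) (r (k + 1)))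
    (h3 : y (ℓ - 1) + wt ≤ γ * τ)
    (h4 : y 0 = 0) (h5 : wt = 0) :
    0 ≤ γ * τ + γ * ∑ k ∈ range (ℓ - 1), taDist (r k) (s k)
        - ∑ k ∈ range (ℓ - 1), taDist (s k) (r (k + 1)) := by
  have hpath := sum_range_le_sum_range_add_of_dual h1 fun k hk => h2 k (by omega)
  rw [← mul_sum, h4] at hpath
  rw [h5, add_zero] at h3
  linarith

/-- Lemma 3.3 (virtualgeq0): a virtual augmenting path, ending with the edge of
length τ (the last request's waiting time) to its moving virtual server, has
nonnegative γ-net-cost under the dual invariants. -/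
theorem virtualPath_netCost_nonneg (γ : ℝ) (ℓ : ℕ) (hℓ : 1 ≤ ℓ)
    (r s : ℕ → ℝ × ℝ) (τ : ℝ) (hτ : 0 ≤ τ)
    (y w : ℕ → ℝ) (wt : ℝ)
    (h1 : ∀ k, k < ℓ - 1 → y k + w k ≤ γ * taDist (r k) (s k))
    (h2 : ∀ k, k + 1 < ℓ → w k + y (k + 1) = taDist (s k) (r (k + 1)))
    (h3 : y (ℓ - 1) + wt ≤ γ * τ)
    (h4 : y 0 = 0) (h5 : wt = 0) :
    0 ≤ γ * τ + γ * ∑ k ∈ range (ℓ - 1), taDist (r k) (s k)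
        - ∑ k ∈ range (ℓ - 1), taDist (s k) (r (k + 1)) :=
  virtualPath_netCost_nonneg_general γ ℓ r s τ y w wt h1 h2 h3 h4 h5
end

section
/- Let γ ≥ 1 be a real number, α a type, and w : α → ℝ a function with w(e) ≥ 0 for all e. Let E₁,…,E_m be finite subsets of α, and define M₀ = ∅ and M_i = M_{i−1} Δ E_i (symmetric difference) for 1 ≤ i ≤ m. Then Σ_{i=1}^{m} ( γ·Σ_{e ∈ E_i \ M_{i−1}} w(e) − Σ_{e ∈ E_i ∩ M_{i−1}} w(e) ) ≥ ((γ−1)/2) · Σ_{i=1}^{m} Σ_{e ∈ E_i} w(e). -/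
/-! Augmenting by `E` changes the weight of the current set `M` by `w(E \ M) - w(E ∩ M)`, so
these net changes telescope to `w(M_m) - w(M_0) = w(M_m) ≥ 0`. Writing the `γ`-net cost of a step
as `(γ - 1)/2 · (w(E \ M) + w(E ∩ M)) + (γ + 1)/2 · (w(E \ M) - w(E ∩ M))` and summing, the second
part contributes `(γ + 1)/2 · w(M_m) ≥ 0` and the first is the claimed lower bound. -/

open Finset

namespace Finset

variable {α β : Type*} [DecidableEq α] [AddCommGroup β]

theorem sum_sdiff_union_sdiff (s t : Finset α) (f : α → β) :
    ∑ x ∈ s \ t ∪ t \ s, f x = ∑ x ∈ s, f x + (∑ x ∈ t \ s, f x - ∑ x ∈ t ∩ s, f x) := by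
  rw [sum_union disjoint_sdiff_sdiff, ← sum_inter_add_sum_sdiff s t f, inter_comm]
  abel

theorem sum_range_sum_sdiff_sub_sum_inter {m : ℕ} {E M : ℕ → Finset α} (f : α → β)
    (hM : ∀ i < m, M (i + 1) = M i \ E i ∪ E i \ M i) :
    ∑ i ∈ range m, (∑ x ∈ E i \ M i, f x - ∑ x ∈ E i ∩ M i, f x)
      = ∑ x ∈ M m, f x - ∑ x ∈ M 0, f x := by
  rw [← sum_range_sub (fun i ↦ ∑ x ∈ M i, f x)]
  refine sum_congr rfl fun i hi ↦ ?_
  rw [hM i (mem_range.1 hi), sum_sdiff_union_sdiff]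
  abel

end Finset

/-- The amortized charging inequality (Eq. DPiub) behind Lemma 3.1: the total
γ-net-cost of the augmentations is at least ((γ-1)/2) times the total weight of
all edges of all augmenting paths, where `M i` is the matching (edge set) after
the first `i` augmentations (symmetric differences). -/
theorem amortized_charging {α : Type*} [DecidableEq α] (γ : ℝ) (hγ : 1 ≤ γ)
    (w : α → ℝ) (hw : ∀ e, 0 ≤ w e)
    (m : ℕ) (E : ℕ → Finset α) (M : ℕ → Finset α)
    (hM0 : M 0 = ∅)
    (hM : ∀ i < m, M (i + 1) = (M i \ E i) ∪ (E i \ M i)) :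
    ((γ - 1) / 2) * ∑ i ∈ range m, ∑ e ∈ E i, w e
      ≤ ∑ i ∈ range m,
          (γ * ∑ e ∈ E i \ M i, w e - ∑ e ∈ E i ∩ M i, w e) := by
  have htelescope := sum_range_sum_sdiff_sub_sum_inter w hM
  rw [hM0, sum_empty, sub_zero] at htelescope
  have hfinal : 0 ≤ (γ + 1) / 2 * ∑ e ∈ M m, w e :=
    mul_nonneg (by linarith) (sum_nonneg fun e _ ↦ hw e)
  calc (γ - 1) / 2 * ∑ i ∈ range m, ∑ e ∈ E i, w e
      ≤ (γ - 1) / 2 * ∑ i ∈ range m, ∑ e ∈ E i, w e + (γ + 1) / 2 * ∑ e ∈ M m, w e :=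
        le_add_of_nonneg_right hfinal
    _ = ∑ i ∈ range m, (γ * ∑ e ∈ E i \ M i, w e - ∑ e ∈ E i ∩ M i, w e) := by
        rw [← htelescope, mul_sum, mul_sum, ← sum_add_distrib]
        refine sum_congr rfl fun i _ ↦ ?_
        rw [← sum_inter_add_sum_sdiff (E i) (M i) w]
        ring
end

section
/- Let γ > 1 be a real number and let V be a set of labelled vertices, each vertex v carrying a position in ℝ², with D(u,v) the ℓ1 distance between the positions of u and v. For i = 1,…,m let P_i be a simple alternating path given by pairwise distinct vertices r^i_1, s^i_1, …, r^i_{ℓ_i}, s^i_{ℓ_i} of V, with edge set E_i = { {r^i_k, s^i_k} : 1 ≤ k ≤ ℓ_i } ∪ { {s^i_k, r^i_{k+1}} : 1 ≤ k ≤ ℓ_i − 1 } (unordered pairs of vertices). Define M₀ = ∅ and M_i = M_{i−1} Δ E_i, and assume each P_i is M_{i−1}-augmenting: {r^i_k, s^i_k} ∉ M_{i−1} for all 1 ≤ k ≤ ℓ_i and {s^i_k, r^i_{k+1}} ∈ M_{i−1} for all 1 ≤ k ≤ ℓ_i − 1. Let φ_i = γ·Σ_{k=1}^{ℓ_i} D(r^i_k,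 s^i_k) − Σ_{k=1}^{ℓ_i−1} D(s^i_k, r^i_{k+1}) be the γ-net-cost of P_i. Then the total TA-plane distance of the online matching, which matches the two endpoints of each path, satisfies Σ_{i=1}^{m} D(r^i_1, s^i_{ℓ_i}) ≤ (2/(γ−1)) · Σ_{i=1}^{m} φ_i. -/
open Finset

/-!
Augmenting the offline matching along `P_i` adds the edges `{r_k, s_k}` and removes the edges
`{s_k, r_{k+1}}`, so its weight changes by `A_i - B_i`, the difference of the two edge sums of
`P_i`. The weight starts at `0` and stays nonnegative, hence `∑ B_i ≤ ∑ A_i`. By the triangle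
inequality along `P_i`, the online edge `{r_1, s_ℓ}` costs at most `A_i + B_i`, and
`(γ - 1)(A + B) ≤ 2(γ A - B)` is equivalent to `0 ≤ (γ + 1)(A - B)`.
-/

lemma taDist_nonneg (p q : ℝ × ℝ) : 0 ≤ taDist p q := by
  unfold taDist; positivity

lemma taDist_comm (p q : ℝ × ℝ) : taDist p q = taDist q p := by
  unfold taDist; rw [abs_sub_comm, abs_sub_comm p.2]

lemma taDist_triangle (p q r : ℝ × ℝ) : taDist p r ≤ taDist p q + taDist q r := by
  unfold taDist
  linarith [abs_sub_le p.1 q.1 r.1, abs_sub_le p.2 q.2 r.2]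

lemma taDist_le_sum_alternating (a b : ℕ → ℝ × ℝ) (n : ℕ) :
    taDist (a 0) (b n) ≤ ∑ k ∈ range (n + 1), taDist (a k) (b k)
      + ∑ k ∈ range n, taDist (b k) (a (k + 1)) := by
  induction n with
  | zero => simp
  | succ n ih =>
    rw [sum_range_succ _ (n + 1), sum_range_succ (fun k => taDist (b k) (a (k + 1)))]
    linarith [taDist_triangle (a 0) (b n) (a (n + 1)),
      taDist_triangle (a 0) (a (n + 1)) (b (n + 1))]

lemma Finset.sum_sdiff_union_sdiff_s5 {ι β : Type*} [DecidableEq ι] [AddCommGroup β]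
    (s t : Finset ι) (f : ι → β) :
    ∑ x ∈ (s \ t) ∪ (t \ s), f x = ∑ x ∈ s, f x + ∑ x ∈ t \ s, f x - ∑ x ∈ s ∩ t, f x := by
  rw [sum_union disjoint_sdiff_sdiff, ← sum_inter_add_sum_sdiff s t f]
  abel

lemma two_div_mul_sub_ge_add {γ a b : ℝ} (hγ : 1 < γ) (hba : b ≤ a) :
    a + b ≤ 2 / (γ - 1) * (γ * a - b) := by
  rw [div_mul_eq_mul_div, le_div_iff₀ (by linarith)]
  nlinarith [mul_nonneg (by linarith : (0 : ℝ) ≤ γ + 1) (sub_nonneg.mpr hba)]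

section EdgeDist

variable {V : Type*} (pos : V → ℝ × ℝ)

noncomputable def edgeDist : Sym2 V → ℝ :=
  Sym2.lift ⟨fun u v => taDist (pos u) (pos v), fun _ _ => taDist_comm _ _⟩

lemma edgeDist_nonneg (e : Sym2 V) : 0 ≤ edgeDist pos e := by
  induction e using Sym2.ind with
  | _ u v => exact taDist_nonneg _ _

end EdgeDist

section AlternatingPath

variable {V : Type*} [DecidableEq V] (r s : ℕ → V) (n : ℕ)

def enteringEdges : Finset (Sym2 V) :=
  (range n).image fun k => Sym2.mk (r k) (s k)

def leavingEdges : Finset (Sym2 V) :=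
  (range (n - 1)).image fun k => Sym2.mk (s k) (r (k + 1))

def IsSimpleAlternatingPath : Prop :=
  ∀ k < n, ∀ k' < n, (r k = r k' → k = k') ∧ (s k = s k' → k = k') ∧ r k ≠ s k'

variable {r s n}

lemma sum_enteringEdges {β : Type*} [AddCommMonoid β] (hp : IsSimpleAlternatingPath r s n)
    (f : Sym2 V → β) :
    ∑ e ∈ enteringEdges r s n, f e = ∑ k ∈ range n, f (Sym2.mk (r k) (s k)) := by
  refine sum_image fun k hk k' hk' heq => ?_
  have h := hp k (mem_range.mp hk) k' (mem_range.mp hk')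
  rcases Sym2.eq_iff.mp heq with ⟨hr, -⟩ | ⟨hrs, -⟩
  · exact h.1 hr
  · exact absurd hrs h.2.2

lemma sum_leavingEdges {β : Type*} [AddCommMonoid β] (hp : IsSimpleAlternatingPath r s n)
    (f : Sym2 V → β) :
    ∑ e ∈ leavingEdges r s n, f e = ∑ k ∈ range (n - 1), f (Sym2.mk (s k) (r (k + 1))) := by
  refine sum_image fun k hk k' hk' heq => ?_
  have hk := mem_range.mp hk
  have hk' := mem_range.mp hk'
  rcases Sym2.eq_iff.mp heq with ⟨hs, -⟩ | ⟨hsr, -⟩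
  · exact (hp k (by omega) k' (by omega)).2.1 hs
  · exact absurd hsr.symm (hp (k' + 1) (by omega) k (by omega)).2.2

variable {M E : Finset (Sym2 V)}

lemma sum_symmDiff_augmentingPath {β : Type*} [AddCommGroup β]
    (hp : IsSimpleAlternatingPath r s n) (hE : E = enteringEdges r s n ∪ leavingEdges r s n)
    (hent : ∀ k < n, Sym2.mk (r k) (s k) ∉ M)
    (hleave : ∀ k, k + 1 < n → Sym2.mk (s k) (r (k + 1)) ∈ M) (f : Sym2 V → β) :
    ∑ e ∈ (M \ E) ∪ (E \ M), f e = ∑ e ∈ M, f e + ∑ k ∈ range n, f (Sym2.mk (r k) (s k))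
      - ∑ k ∈ range (n - 1), f (Sym2.mk (s k) (r (k + 1))) := by
  have hdisj : Disjoint (enteringEdges r s n) M := by
    simp only [enteringEdges, disjoint_left, mem_image, mem_range]
    rintro _ ⟨k, hk, rfl⟩
    exact hent k hk
  have hsub : leavingEdges r s n ⊆ M := by
    simp only [leavingEdges, subset_iff, mem_image, mem_range]
    rintro _ ⟨k, hk, rfl⟩
    exact hleave k (by omega)
  have hEM : E \ M = enteringEdges r s n := by
    rw [hE, union_sdiff_distrib, sdiff_eq_self_of_disjoint hdisj,
      sdiff_eq_empty_iff_subset.mpr hsub, union_empty]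
  have hME : M ∩ E = leavingEdges r s n := by
    rw [hE, inter_union_distrib_left, disjoint_iff_inter_eq_empty.mp hdisj.symm,
      inter_eq_right.mpr hsub, empty_union]
  rw [sum_sdiff_union_sdiff_s5, hEM, hME, sum_enteringEdges hp, sum_leavingEdges hp]

end AlternatingPath

/-- Lemma 3.1 (DUB): the total TA-plane distance of the online matching (which
matches the two endpoints of each augmenting path `P_i`) is at most
`2/(γ-1)` times the total γ-net-cost of the augmenting paths, where the offline
matching starts empty and is augmented along each path in turn. -/
theorem online_matching_dist_le (γ : ℝ) (hγ : 1 < γ)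
    {V : Type*} [DecidableEq V] (pos : V → ℝ × ℝ)
    (m : ℕ) (ℓ : ℕ → ℕ) (hℓ : ∀ i < m, 1 ≤ ℓ i)
    (rq sv : ℕ → ℕ → V)
    (hdist : ∀ i < m, ∀ k < ℓ i, ∀ k' < ℓ i,
      (rq i k = rq i k' → k = k') ∧ (sv i k = sv i k' → k = k') ∧
        rq i k ≠ sv i k')
    (E : ℕ → Finset (Sym2 V))
    (hE : ∀ i < m, E i =
        ((range (ℓ i)).image fun k => Sym2.mk (rq i k) (sv i k)) ∪
        ((range (ℓ i - 1)).image fun k => Sym2.mk (sv i k) (rq i (k + 1))))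
    (M : ℕ → Finset (Sym2 V)) (hM0 : M 0 = ∅)
    (hM : ∀ i < m, M (i + 1) = (M i \ E i) ∪ (E i \ M i))
    (haug1 : ∀ i < m, ∀ k < ℓ i, Sym2.mk (rq i k) (sv i k) ∉ M i)
    (haug2 : ∀ i < m, ∀ k, k + 1 < ℓ i → Sym2.mk (sv i k) (rq i (k + 1)) ∈ M i) :
    ∑ i ∈ range m, taDist (pos (rq i 0)) (pos (sv i (ℓ i - 1)))
      ≤ (2 / (γ - 1)) * ∑ i ∈ range m,
          (γ * ∑ k ∈ range (ℓ i), taDist (pos (rq i k)) (pos (sv i k))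
            - ∑ k ∈ range (ℓ i - 1),
                taDist (pos (sv i k)) (pos (rq i (k + 1)))) := by
  set A : ℕ → ℝ := fun i => ∑ k ∈ range (ℓ i), taDist (pos (rq i k)) (pos (sv i k))
  set B : ℕ → ℝ := fun i => ∑ k ∈ range (ℓ i - 1), taDist (pos (sv i k)) (pos (rq i (k + 1)))
  set w : ℕ → ℝ := fun i => ∑ e ∈ M i, edgeDist pos e
  have hstep : ∀ i ∈ range m, w (i + 1) - w i = A i - B i := fun i hi => by
    have hi := mem_range.mp hi
    have hw : w (i + 1) = w i + A i - B i := by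
      simp only [w, hM i hi]
      exact sum_symmDiff_augmentingPath (hdist i hi) (hE i hi) (haug1 i hi) (haug2 i hi) _
    rw [hw]; ring
  have hBA : ∑ i ∈ range m, B i ≤ ∑ i ∈ range m, A i := by
    have htel := sum_range_sub w m
    rw [sum_congr rfl hstep, sum_sub_distrib] at htel
    have hw0 : w 0 = 0 := by simp only [w, hM0, sum_empty]
    linarith [sum_nonneg fun e (_ : e ∈ M m) => edgeDist_nonneg pos e]
  have hend : ∀ i ∈ range m, taDist (pos (rq i 0)) (pos (sv i (ℓ i - 1))) ≤ A i + B i :=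
    fun i hi => by
      have h := taDist_le_sum_alternating (fun k => pos (rq i k)) (fun k => pos (sv i k)) (ℓ i - 1)
      rwa [Nat.sub_add_cancel (hℓ i (mem_range.mp hi))] at h
  calc ∑ i ∈ range m, taDist (pos (rq i 0)) (pos (sv i (ℓ i - 1)))
      ≤ ∑ i ∈ range m, A i + ∑ i ∈ range m, B i := by
        rw [← sum_add_distrib]; exact sum_le_sum hend
    _ ≤ 2 / (γ - 1) * (γ * ∑ i ∈ range m, A i - ∑ i ∈ range m, B i) :=
        two_div_mul_sub_ge_add hγ hBA
    _ = _ := by rw [mul_sum, ← sum_sub_distrib]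
end

section
/- Let R and S be disjoint finite sets of labelled vertices, each vertex carrying a position in ℝ², and let D(r,s) denote the ℓ1 distance between positions. Let γ be a real number. Let M_OFF and M be matchings between R and S (sets of pairs in R × S in which no vertex occurs in more than one pair), and suppose every vertex saturated by M_OFF is also saturated by M. Let z be a real-valued function on R ∪ S satisfying: z(r) + z(s) ≤ γ·D(r,s) for every (r,s) ∈ M; z(r) + z(s) = D(r,s) for every (r,s) ∈ M_OFF; and z(v) = 0 for every vertex v that is saturated by M but not saturated by M_OFF. Then Σ_{(r,s) ∈ M_OFF} D(r,s) ≤ γ · Σ_{(r,s) ∈ M} D(r,s). -/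
open Finset

/-!
By tightness, `D(M_OFF)` is the total dual `∑ z` over the vertices saturated by `M_OFF`. Since `M`
saturates all of these and `z` vanishes on the other vertices saturated by `M`, this is also the
total dual over the vertices saturated by `M`, which dual feasibility bounds by `γ · D(M)`.
-/

theorem Finset.sum_comp_eq_of_image_subset {ι β A : Type*} [AddCommMonoid A] [DecidableEq β]
    {s t : Finset ι} {p : ι → β} (f : β → A) (hs : Set.InjOn p s) (ht : Set.InjOn p t)
    (hsub : t.image p ⊆ s.image p) (hzero : ∀ i ∈ s, p i ∉ t.image p → f (p i) = 0) :
    ∑ i ∈ s, f (p i) = ∑ i ∈ t, f (p i) := by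
  rw [← sum_image hs, ← sum_image ht]
  refine (sum_subset hsub fun b hb hbt => ?_).symm
  obtain ⟨i, hi, rfl⟩ := mem_image.mp hb
  exact hzero i hi hbt

/-- Lemma B.5 (diffM): if every vertex saturated by the offline matching `MOFF`
is also saturated by a matching `M`, and the duals are feasible on `M`, tight on
`MOFF`, and zero on vertices saturated by `M` but not by `MOFF`, then
`D(MOFF) ≤ γ·D(M)`. -/
theorem offline_matching_dist_le {R S : Type*}
    (posR : R → ℝ × ℝ) (posS : S → ℝ × ℝ) (γ : ℝ)
    (MOFF M : Finset (R × S))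
    (hMOFFmatch : ∀ e ∈ MOFF, ∀ e' ∈ MOFF, e.1 = e'.1 ∨ e.2 = e'.2 → e = e')
    (hMmatch : ∀ e ∈ M, ∀ e' ∈ M, e.1 = e'.1 ∨ e.2 = e'.2 → e = e')
    (hsat : ∀ e ∈ MOFF, (∃ e' ∈ M, e'.1 = e.1) ∧ (∃ e' ∈ M, e'.2 = e.2))
    (zR : R → ℝ) (zS : S → ℝ)
    (hfeas : ∀ e ∈ M, zR e.1 + zS e.2 ≤ γ * taDist (posR e.1) (posS e.2))
    (htight : ∀ e ∈ MOFF, zR e.1 + zS e.2 = taDist (posR e.1) (posS e.2))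
    (hzeroR : ∀ e ∈ M, (∀ e' ∈ MOFF, e'.1 ≠ e.1) → zR e.1 = 0)
    (hzeroS : ∀ e ∈ M, (∀ e' ∈ MOFF, e'.2 ≠ e.2) → zS e.2 = 0) :
    ∑ e ∈ MOFF, taDist (posR e.1) (posS e.2)
      ≤ γ * ∑ e ∈ M, taDist (posR e.1) (posS e.2) := by
  classical
  have hR : ∑ e ∈ M, zR e.1 = ∑ e ∈ MOFF, zR e.1 :=
    sum_comp_eq_of_image_subset zR
      (fun e he e' he' h => hMmatch e he e' he' (.inl h))
      (fun e he e' he' h => hMOFFmatch e he e' he' (.inl h))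
      (image_subset_iff.mpr fun e he => mem_image.mpr (hsat e he).1)
      (fun e he hr => hzeroR e he fun e' he' h => hr (mem_image.mpr ⟨e', he', h⟩))
  have hS : ∑ e ∈ M, zS e.2 = ∑ e ∈ MOFF, zS e.2 :=
    sum_comp_eq_of_image_subset zS
      (fun e he e' he' h => hMmatch e he e' he' (.inr h))
      (fun e he e' he' h => hMOFFmatch e he e' he' (.inr h))
      (image_subset_iff.mpr fun e he => mem_image.mpr (hsat e he).2)
      (fun e he hs => hzeroS e he fun e' he' h => hs (mem_image.mpr ⟨e', he', h⟩))
  calc ∑ e ∈ MOFF, taDist (posR e.1) (posS e.2)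
      = ∑ e ∈ MOFF, (zR e.1 + zS e.2) := (sum_congr rfl htight).symm
    _ = ∑ e ∈ M, (zR e.1 + zS e.2) := by rw [sum_add_distrib, sum_add_distrib, hR, hS]
    _ ≤ ∑ e ∈ M, γ * taDist (posR e.1) (posS e.2) := sum_le_sum hfeas
    _ = γ * ∑ e ∈ M, taDist (posR e.1) (posS e.2) := (mul_sum ..).symm
end

section
/- Fix a real number γ and an integer ℓ ≥ 1. Let r₁,…,r_ℓ and s₁,…,s_ℓ be points in ℝ² and let y₁,…,y_ℓ, w₁,…,w_ℓ be real numbers satisfying: (i) y_k + w_k ≤ γ·D(r_k, s_k) for every 1 ≤ k ≤ ℓ; (ii) w_k + y_{k+1} = D(s_k, r_{k+1}) for every 1 ≤ k ≤ ℓ−1; (iii) y₁ = 0 and w_ℓ = 0. Then the total length of the forward edges is at least a 1/(γ+1) fraction of the total length of the path: (γ+1) · Σ_{k=1}^{ℓ} D(r_k, s_k) ≥ Σ_{k=1}^{ℓ} D(r_k, s_k) + Σ_{k=1}^{ℓ−1} D(s_k, r_{k+1}). -/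
open Finset

/-!
By (ii) and (iii), the backward edges have total length `∑ (w k + y (k + 1)) = ∑ (y k + w k)`,
the boundary terms `y 0` and `w (ℓ - 1)` being zero; by (i) this is at most `γ` times the total
length of the forward edges.
-/

theorem sum_range_pred_add_shift_eq {M : Type*} [AddCommMonoid M] (y w : ℕ → M) (ℓ : ℕ)
    (hy : y 0 = 0) (hw : w (ℓ - 1) = 0) :
    ∑ k ∈ range (ℓ - 1), (w k + y (k + 1)) = ∑ k ∈ range ℓ, (y k + w k) := by
  cases ℓ with
  | zero => simp
  | succ n =>
    rw [Nat.add_sub_cancel] at hw ⊢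
    rw [sum_add_distrib, sum_add_distrib, sum_range_succ' y, sum_range_succ w, hy, hw,
      add_zero, add_zero, add_comm]

theorem forward_edges_fraction_general (γ : ℝ) (ℓ : ℕ)
    (r s : ℕ → ℝ × ℝ) (y w : ℕ → ℝ)
    (h1 : ∀ k < ℓ, y k + w k ≤ γ * taDist (r k) (s k))
    (h2 : ∀ k, k + 1 < ℓ → w k + y (k + 1) = taDist (s k) (r (k + 1)))
    (h3 : y 0 = 0) (h4 : w (ℓ - 1) = 0) :
    ∑ k ∈ range ℓ, taDist (r k) (s k)
        + ∑ k ∈ range (ℓ - 1), taDist (s k) (r (k + 1))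
      ≤ (γ + 1) * ∑ k ∈ range ℓ, taDist (r k) (s k) := by
  have backward_eq : ∑ k ∈ range (ℓ - 1), taDist (s k) (r (k + 1))
      = ∑ k ∈ range ℓ, (y k + w k) := by
    rw [← sum_range_pred_add_shift_eq y w ℓ h3 h4]
    exact sum_congr rfl fun k hk => (h2 k (by have := mem_range.1 hk; omega)).symm
  have dual_le : ∑ k ∈ range ℓ, (y k + w k) ≤ γ * ∑ k ∈ range ℓ, taDist (r k) (s k) := by
    rw [mul_sum]
    exact sum_le_sum fun k hk => h1 k (mem_range.1 hk)
  linarith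

/-- Lemma B.2 (OPTLB1): under the dual invariants, the total length of the
forward edges of an alternating path is at least a `1/(γ+1)` fraction of the
total length of the path. -/
theorem forward_edges_fraction (γ : ℝ) (ℓ : ℕ) (hℓ : 1 ≤ ℓ)
    (r s : ℕ → ℝ × ℝ) (y w : ℕ → ℝ)
    (h1 : ∀ k < ℓ, y k + w k ≤ γ * taDist (r k) (s k))
    (h2 : ∀ k, k + 1 < ℓ → w k + y (k + 1) = taDist (s k) (r (k + 1)))
    (h3 : y 0 = 0) (h4 : w (ℓ - 1) = 0) :
    ∑ k ∈ range ℓ, taDist (r k) (s k)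
        + ∑ k ∈ range (ℓ - 1), taDist (s k) (r (k + 1))
      ≤ (γ + 1) * ∑ k ∈ range ℓ, taDist (r k) (s k) :=
  forward_edges_fraction_general γ ℓ r s y w h1 h2 h3 h4
end

section
/- Let R and S be sets of labelled vertices with positions in ℝ², γ a real number, and D the ℓ1 distance between positions. Let z_R : R → ℝ and z_S : S → ℝ satisfy z_R(r) + z_S(s) ≤ γ·D(r,s) for all r ∈ R, s ∈ S. Let M ⊆ R × S, and let d_R : R → ℝ and d_S : S → ℝ (shortest-distance labels in the slack graph) satisfy: d_S(s) ≤ d_R(r) + (γ·D(r,s) − z_R(r) − z_S(s)) whenever (r,s) ∉ M, and d_R(r) = d_S(s) whenever (r,s) ∈ M. Let L ∈ ℝ, and define updated duals z'_R(r) = z_R(r) + max(0, L − d_R(r)) and z'_S(s) = z_S(s) − max(0, L − d_S(s)). Then z'_R(r) + z'_S(s) ≤ γ·D(r,s) for all r ∈ R, s ∈ S, and moreover z'_R(r) + z'_S(s) = z_R(r) + z_S(s) for all (r,s) ∈ M. -/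
open Finset

/-- Step 1 of the dual adjustment (Section 3.2.3) preserves dual feasibility
(invariant I1) and keeps the dual sum unchanged on matched edges. -/
theorem dual_update_feasible {R S : Type*}
    (posR : R → ℝ × ℝ) (posS : S → ℝ × ℝ) (γ : ℝ)
    (zR : R → ℝ) (zS : S → ℝ)
    (hfeas : ∀ (r : R) (s : S), zR r + zS s ≤ γ * taDist (posR r) (posS s))
    (M : Set (R × S)) (dR : R → ℝ) (dS : S → ℝ)
    (hnon : ∀ r s, (r, s) ∉ M →
      dS s ≤ dR r + (γ * taDist (posR r) (posS s) - zR r - zS s))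
    (hmem : ∀ r s, (r, s) ∈ M → dR r = dS s)
    (L : ℝ) :
    (∀ (r : R) (s : S),
        (zR r + max 0 (L - dR r)) + (zS s - max 0 (L - dS s))
          ≤ γ * taDist (posR r) (posS s)) ∧
    (∀ (r : R) (s : S), (r, s) ∈ M →
        (zR r + max 0 (L - dR r)) + (zS s - max 0 (L - dS s))
          = zR r + zS s) := by
  constructor
  · intro r s
    by_cases hM : (r, s) ∈ M
    · have h := hmem r s hM
      have := hfeas r s
      rw [h]; linarith [le_max_left 0 (L - dS s)]
    · have h := hnon r s hM
      have hf := hfeas r s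
      rcases le_or_gt (L - dR r) 0 with h1 | h1
      · rw [max_eq_left h1]
        linarith [le_max_left 0 (L - dS s)]
      · rw [max_eq_right h1.le]
        linarith [le_max_right 0 (L - dS s)]
  · intro r s hM
    rw [hmem r s hM]; ring
end

section
/- Fix a real number γ and an integer n ≥ 1. Let r₁,…,r_n and s₁,…,s_n be points in ℝ² and let y₁,…,y_n, w₁,…,w_n be real numbers (dual values) satisfying, with indices taken cyclically (so r_{n+1} means r₁ and y_{n+1} means y₁): (i) y_k + w_k ≤ γ·D(r_k, s_k) for every 1 ≤ k ≤ n; (ii) w_k + y_{k+1} = D(s_k, r_{k+1}) for every 1 ≤ k ≤ n. Then the γ-net-cost of the alternating cycle is nonnegative: γ·Σ_{k=1}^{n} D(r_k, s_k) − Σ_{k=1}^{n} D(s_k, r_{k+1}) ≥ 0. -/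
open Finset

/-! Summing the tight backward edges and the feasible forward edges, every dual value `y k`
and `w k` occurs exactly once on each side, since `k ↦ (k + 1) % n` permutes `range n`. -/

theorem Finset.sum_range_succ_mod {M : Type*} [AddCommMonoid M] (n : ℕ) (f : ℕ → M) :
    ∑ k ∈ range n, f ((k + 1) % n) = ∑ k ∈ range n, f k := by
  cases n with
  | zero => rfl
  | succ m =>
    rw [sum_range_succ, Nat.mod_self, sum_range_succ' f m]
    congr 1
    refine sum_congr rfl fun k hk => ?_
    rw [Nat.mod_eq_of_lt (by simpa using mem_range.mp hk)]

theorem sum_le_sum_of_cycle_duals {n : ℕ} {y w a b : ℕ → ℝ}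
    (hfeas : ∀ k < n, y k + w k ≤ a k)
    (htight : ∀ k < n, w k + y ((k + 1) % n) = b k) :
    ∑ k ∈ range n, b k ≤ ∑ k ∈ range n, a k :=
  calc ∑ k ∈ range n, b k
      = ∑ k ∈ range n, (w k + y ((k + 1) % n)) :=
        (sum_congr rfl fun k hk => htight k (mem_range.mp hk)).symm
    _ = ∑ k ∈ range n, (y k + w k) := by
        rw [sum_add_distrib, sum_range_succ_mod, add_comm, ← sum_add_distrib]
    _ ≤ ∑ k ∈ range n, a k := sum_le_sum fun k hk => hfeas k (mem_range.mp hk)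

theorem cycle_netCost_nonneg_general (γ : ℝ) (n : ℕ)
    (r s : ℕ → ℝ × ℝ) (y w : ℕ → ℝ)
    (h1 : ∀ k < n, y k + w k ≤ γ * taDist (r k) (s k))
    (h2 : ∀ k < n, w k + y ((k + 1) % n) = taDist (s k) (r ((k + 1) % n))) :
    0 ≤ γ * ∑ k ∈ range n, taDist (r k) (s k)
        - ∑ k ∈ range n, taDist (s k) (r ((k + 1) % n)) := by
  rw [sub_nonneg, mul_sum]
  exact sum_le_sum_of_cycle_duals h1 h2

/-- The core of Claim C.6 (bwlb): an alternating cycle whose duals are feasible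
on forward edges and tight on backward edges (taken cyclically) has nonnegative
γ-net-cost. -/
theorem cycle_netCost_nonneg (γ : ℝ) (n : ℕ) (hn : 1 ≤ n)
    (r s : ℕ → ℝ × ℝ) (y w : ℕ → ℝ)
    (h1 : ∀ k < n, y k + w k ≤ γ * taDist (r k) (s k))
    (h2 : ∀ k < n, w k + y ((k + 1) % n) = taDist (s k) (r ((k + 1) % n))) :
    0 ≤ γ * ∑ k ∈ range n, taDist (r k) (s k)
        - ∑ k ∈ range n, taDist (s k) (r ((k + 1) % n)) :=
  cycle_netCost_nonneg_general γ n r s y w h1 h2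
end
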